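/- arXiv:2507.06428 — 2 statements merged into one kernel-verified Lean document; each statement's English description precedes it below -/
import Mathlib

section
/- Let Q ∈ C²(ℝ^d) be given by Q(x) = k‖x‖² where k = (√(q²γ² + 4pqξ²) − γq)/(2ξ²) with p, q, ξ, γ > 0, and for each x let H(a) = Σ_{i=1}^d [∂²_i Q(x)(1 + εx_i a_i)² + ξ ∂_i Q(x) a_i] + q‖a‖² + f̃(x), where f̃(x) = γk‖x‖² + Σ_i k²(ξ+2ε)² x_i² / (q + 2kε²x_i²) − 2kd. Then the infimum over a ∈ ℝ^d of H(a) is attained at a_i* = −x_i k(ξ + 2ε)/(q + 2kε²x_i²), and inf_a H(a) − γQ(x) = 0 for all x ∈ ℝ^d. -/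
/-!
With `∂ᵢQ = 2k xᵢ` and `∂²ᵢQ = 2k`, the Hamiltonian splits into a sum of one-dimensional
quadratics `t ↦ 2k(1 + εXt)² + 2kξXt + qt² = (q + 2kε²X²) t² + 2kX(ξ + 2ε) t + 2k`.
Since `k ≥ 0`, each has positive leading coefficient, so completing the square gives the
minimizer `-kX(ξ + 2ε)/(q + 2kε²X²)` and the minimum `2k - k²(ξ + 2ε)²X²/(q + 2kε²X²)`.
The source term `f̃` is built to cancel exactly these minima, leaving `γk‖x‖² = γQ(x)`.
-/

open Finset

/-- The `i`-th summand of the Hamiltonian (including `q aᵢ²`) at `xᵢ = X`, `aᵢ = t`. -/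
def coordCost (k q ξ ε X t : ℝ) : ℝ :=
  2 * k * (1 + ε * X * t) ^ 2 + ξ * (2 * k * X) * t + q * t ^ 2

noncomputable def coordMinimizer (k q ξ ε X : ℝ) : ℝ :=
  -X * k * (ξ + 2 * ε) / (q + 2 * k * ε ^ 2 * X ^ 2)

section coordCost

variable {k q ξ ε X : ℝ}

theorem coordCost_eq_sq_add (hD : q + 2 * k * ε ^ 2 * X ^ 2 ≠ 0) (t : ℝ) :
    coordCost k q ξ ε X t =
      (q + 2 * k * ε ^ 2 * X ^ 2) * (t - coordMinimizer k q ξ ε X) ^ 2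
        + (2 * k - k ^ 2 * (ξ + 2 * ε) ^ 2 * X ^ 2 / (q + 2 * k * ε ^ 2 * X ^ 2)) := by
  unfold coordCost coordMinimizer
  field_simp
  ring

theorem coordCost_coordMinimizer (hD : q + 2 * k * ε ^ 2 * X ^ 2 ≠ 0) :
    coordCost k q ξ ε X (coordMinimizer k q ξ ε X) =
      2 * k - k ^ 2 * (ξ + 2 * ε) ^ 2 * X ^ 2 / (q + 2 * k * ε ^ 2 * X ^ 2) := by
  rw [coordCost_eq_sq_add hD, sub_self, zero_pow two_ne_zero, mul_zero, zero_add]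

theorem coordCost_coordMinimizer_le (hD : 0 < q + 2 * k * ε ^ 2 * X ^ 2) (t : ℝ) :
    coordCost k q ξ ε X (coordMinimizer k q ξ ε X) ≤ coordCost k q ξ ε X t := by
  rw [coordCost_coordMinimizer hD.ne', coordCost_eq_sq_add hD.ne']
  exact le_add_of_nonneg_left (by positivity)

end coordCost

theorem lqr_gain_nonneg {p q : ℝ} (hp : 0 < p) (hq : 0 < q) (ξ γ : ℝ) :
    0 ≤ (Real.sqrt (q ^ 2 * γ ^ 2 + 4 * p * q * ξ ^ 2) - γ * q) / (2 * ξ ^ 2) := by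
  have h : γ * q ≤ Real.sqrt (q ^ 2 * γ ^ 2 + 4 * p * q * ξ ^ 2) :=
    (le_abs_self _).trans <| Real.abs_le_sqrt <| by nlinarith [mul_pos hp hq, sq_nonneg ξ]
  exact div_nonneg (sub_nonneg.mpr h) (by positivity)

theorem lqr_closed_form_solution_general (d : ℕ) (p q ξ γ ε : ℝ)
    (hp : 0 < p) (hq : 0 < q)
    (x : Fin d → ℝ) :
    -- Q(x) = k‖x‖², ∂ᵢQ(x) = 2kxᵢ, ∂²ᵢQ(x) = 2k
    let k : ℝ := (Real.sqrt (q ^ 2 * γ ^ 2 + 4 * p * q * ξ ^ 2) - γ * q) / (2 * ξ ^ 2)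
    let ftil : ℝ := γ * k * (∑ i, (x i) ^ 2)
        + (∑ i, k ^ 2 * (ξ + 2 * ε) ^ 2 * (x i) ^ 2 / (q + 2 * k * ε ^ 2 * (x i) ^ 2))
        - 2 * k * d
    let H : (Fin d → ℝ) → ℝ := fun a =>
      (∑ i, ((2 * k) * (1 + ε * x i * a i) ^ 2 + ξ * (2 * k * x i) * a i))
        + q * (∑ i, (a i) ^ 2) + ftil
    let astar : Fin d → ℝ := fun i =>
      -(x i) * k * (ξ + 2 * ε) / (q + 2 * k * ε ^ 2 * (x i) ^ 2)
    (∀ a : Fin d → ℝ, H astar ≤ H a) ∧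
      H astar - γ * (k * ∑ i, (x i) ^ 2) = 0 := by
  intro k ftil H astar
  have hD : ∀ i, 0 < q + 2 * k * ε ^ 2 * x i ^ 2 := fun i => by
    have := lqr_gain_nonneg hp hq ξ γ
    positivity
  have hH : ∀ a, H a = ∑ i, coordCost k q ξ ε (x i) (a i) + ftil := fun a => by
    simp only [H, coordCost, mul_sum, ← sum_add_distrib]
  have hastar : astar = fun i => coordMinimizer k q ξ ε (x i) := rfl
  refine ⟨fun a => ?_, ?_⟩
  · rw [hH, hH, hastar]
    gcongr with i
    exact coordCost_coordMinimizer_le (hD i) (a i)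
  · rw [hH, hastar]
    simp only [coordCost_coordMinimizer (hD _).ne', sum_sub_distrib, sum_const, card_univ,
      Fintype.card_fin, nsmul_eq_mul, ftil]
    ring

theorem lqr_closed_form_solution (d : ℕ) (p q ξ γ ε : ℝ)
    (hp : 0 < p) (hq : 0 < q) (hξ : 0 < ξ) (hγ : 0 < γ)
    (x : Fin d → ℝ) :
    -- Q(x) = k‖x‖², ∂ᵢQ(x) = 2kxᵢ, ∂²ᵢQ(x) = 2k
    let k : ℝ := (Real.sqrt (q ^ 2 * γ ^ 2 + 4 * p * q * ξ ^ 2) - γ * q) / (2 * ξ ^ 2)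
    let ftil : ℝ := γ * k * (∑ i, (x i) ^ 2)
        + (∑ i, k ^ 2 * (ξ + 2 * ε) ^ 2 * (x i) ^ 2 / (q + 2 * k * ε ^ 2 * (x i) ^ 2))
        - 2 * k * d
    let H : (Fin d → ℝ) → ℝ := fun a =>
      (∑ i, ((2 * k) * (1 + ε * x i * a i) ^ 2 + ξ * (2 * k * x i) * a i))
        + q * (∑ i, (a i) ^ 2) + ftil
    let astar : Fin d → ℝ := fun i =>
      -(x i) * k * (ξ + 2 * ε) / (q + 2 * k * ε ^ 2 * (x i) ^ 2)
    (∀ a : Fin d → ℝ, H astar ≤ H a) ∧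
      H astar - γ * (k * ∑ i, (x i) ^ 2) = 0 :=
  lqr_closed_form_solution_general d p q ξ γ ε hp hq x
end

section
/- Let σ ∈ C¹(ℝ), and for fixed x ∈ ℝ^d define ψ(h) = Σ_{i=1}^d Q(x + (h/√2) Φ_{·,i} + (h²/(2d)) b), where Q ∈ C²(ℝ^d), b ∈ ℝ^d, and Φ_{·,i} ∈ ℝ^d are the columns of a matrix Φ ∈ ℝ^{d×d}. Then ψ is twice differentiable at 0 and ψ''(0) = ⟨b, ∇Q(x)⟩ + (1/2) Tr(ΦΦᵀ Hess Q(x)). -/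
open Finset Matrix

noncomputable def pd {d : ℕ} (f : (Fin d → ℝ) → ℝ) (i : Fin d) (x : Fin d → ℝ) : ℝ :=
  fderiv ℝ f x (Pi.single i 1)

noncomputable def pd2 {d : ℕ} (f : (Fin d → ℝ) → ℝ) (i j : Fin d) (x : Fin d → ℝ) : ℝ :=
  fderiv ℝ (fun y => fderiv ℝ f y (Pi.single i 1)) x (Pi.single j 1)

/-!
Each summand of `ψ` is `Q` along a quadratic curve `t ↦ x + t • a + t ^ 2 • c`, whose second
derivative at `0` is `D²Q(x)(a, a) + DQ(x)(2 • c)`. With `a = Φ_{·,i} / √2` and `c = b / (2d)`,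
the `d` first-order terms add up to `DQ(x) b`, and expanding the bilinear form `D²Q(x)` in the
standard basis turns `∑ᵢ D²Q(x)(Φ_{·,i}, Φ_{·,i})` into `∑ⱼₖ (ΦΦᵀ)ⱼₖ ∂ⱼ∂ₖQ(x)`. Since `ΦΦᵀ` is
symmetric, the order of differentiation in `pd2` does not matter, so no symmetry of second
derivatives is needed.
-/

section QuadraticCurve

variable {E F : Type*} [NormedAddCommGroup E] [NormedSpace ℝ E]
  [NormedAddCommGroup F] [NormedSpace ℝ F] {Q : E → F}

theorem fderiv_fderiv_apply_const {x : E} (hQ' : DifferentiableAt ℝ (fderiv ℝ Q) x) (u v : E) :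
    fderiv ℝ (fun y => fderiv ℝ Q y u) x v = fderiv ℝ (fderiv ℝ Q) x v u := by
  rw [fderiv_clm_apply hQ' (differentiableAt_const u)]
  simp

variable (x a c : E)

theorem hasDerivAt_quadraticCurve (t : ℝ) :
    HasDerivAt (fun s : ℝ => x + s • a + s ^ 2 • c) (a + (2 * t) • c) t := by
  have hsq : HasDerivAt (fun s : ℝ => s ^ 2) (2 * t) t := by
    simpa using hasDerivAt_pow 2 t
  simpa using (((hasDerivAt_id t).smul_const a).const_add x).fun_add (hsq.smul_const c)

theorem hasDerivAt_comp_quadraticCurve (hQ : Differentiable ℝ Q) (t : ℝ) :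
    HasDerivAt (fun s : ℝ => Q (x + s • a + s ^ 2 • c))
      (fderiv ℝ Q (x + t • a + t ^ 2 • c) (a + (2 * t) • c)) t :=
  (hQ _).hasFDerivAt.comp_hasDerivAt t (hasDerivAt_quadraticCurve x a c t)

theorem hasDerivAt_deriv_comp_quadraticCurve_zero (hQ : Differentiable ℝ Q)
    (hQ' : DifferentiableAt ℝ (fderiv ℝ Q) x) :
    HasDerivAt (deriv fun s : ℝ => Q (x + s • a + s ^ 2 • c))
      (fderiv ℝ (fderiv ℝ Q) x a a + fderiv ℝ Q x (2 • c)) 0 := by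
  have hderiv : deriv (fun s : ℝ => Q (x + s • a + s ^ 2 • c)) =
      fun t => fderiv ℝ Q (x + t • a + t ^ 2 • c) (a + (2 * t) • c) :=
    funext fun t => (hasDerivAt_comp_quadraticCurve x a c hQ t).deriv
  have hslope : HasDerivAt (fun t : ℝ => fderiv ℝ Q (x + t • a + t ^ 2 • c))
      (fderiv ℝ (fderiv ℝ Q) x a) 0 :=
    hQ'.hasFDerivAt.comp_hasDerivAt_of_eq 0
      (by simpa using hasDerivAt_quadraticCurve x a c 0) (by simp)
  have hdir : HasDerivAt (fun t : ℝ => a + (2 * t) • c) (2 • c) 0 := by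
    simpa [two_smul] using (((hasDerivAt_id (0 : ℝ)).const_mul 2).smul_const c).const_add a
  rw [hderiv]
  simpa using hslope.clm_apply hdir

theorem hasDerivAt_deriv_sum_comp_quadraticCurve_zero {ι : Type*} (s : Finset ι) (a : ι → E)
    (hQ : Differentiable ℝ Q) (hQ' : DifferentiableAt ℝ (fderiv ℝ Q) x) :
    HasDerivAt (deriv fun t : ℝ => ∑ i ∈ s, Q (x + t • a i + t ^ 2 • c))
      (∑ i ∈ s, (fderiv ℝ (fderiv ℝ Q) x (a i) (a i) + fderiv ℝ Q x (2 • c))) 0 := by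
  have hderiv : (deriv fun t : ℝ => ∑ i ∈ s, Q (x + t • a i + t ^ 2 • c)) =
      fun t => ∑ i ∈ s, deriv (fun t : ℝ => Q (x + t • a i + t ^ 2 • c)) t :=
    funext fun t => deriv_fun_sum fun i _ =>
      (hasDerivAt_comp_quadraticCurve x (a i) c hQ t).differentiableAt
  rw [hderiv]
  exact HasDerivAt.fun_sum fun i _ => hasDerivAt_deriv_comp_quadraticCurve_zero x (a i) c hQ hQ'

end QuadraticCurve

section Coordinates

variable {ι κ R : Type*} [Fintype ι] [DecidableEq ι] [Fintype κ]

theorem map_eq_sum_smul_map_single [Semiring R] {M : Type*} [AddCommMonoid M] [Module R M]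
    {G : Type*} [FunLike G (ι → R) M] [LinearMapClass G R (ι → R) M] (f : G) (w : ι → R) :
    f w = ∑ i, w i • f (Pi.single i 1) := by
  conv_lhs => rw [pi_eq_sum_univ' w]
  simp only [map_sum, map_smul]

variable {𝕜 : Type*} [NontriviallyNormedField 𝕜]

theorem bilin_apply_self_eq_sum (B : (ι → 𝕜) →L[𝕜] (ι → 𝕜) →L[𝕜] 𝕜) (w : ι → 𝕜) :
    B w w = ∑ i, ∑ j, w i * w j * B (Pi.single i 1) (Pi.single j 1) := by
  rw [map_eq_sum_smul_map_single B w, _root_.sum_apply]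
  refine sum_congr rfl fun i _ => ?_
  rw [_root_.smul_apply, map_eq_sum_smul_map_single (B _) w, smul_eq_mul, mul_sum]
  simp only [smul_eq_mul, mul_assoc]

theorem sum_bilin_apply_col_eq_sum_mul_transpose (B : (ι → 𝕜) →L[𝕜] (ι → 𝕜) →L[𝕜] 𝕜)
    (Φ : Matrix ι κ 𝕜) :
    ∑ k, B (fun i => Φ i k) (fun i => Φ i k) =
      ∑ i, ∑ j, (Φ * Φᵀ) i j * B (Pi.single i 1) (Pi.single j 1) := by
  simp only [bilin_apply_self_eq_sum B, mul_apply, transpose_apply, sum_mul]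
  rw [sum_comm]
  exact sum_congr rfl fun i _ => sum_comm

theorem sum_mul_transpose_mul_pd2 {d : ℕ} {Q : (Fin d → ℝ) → ℝ} {x : Fin d → ℝ}
    (hQ' : DifferentiableAt ℝ (fderiv ℝ Q) x) (Φ : Matrix (Fin d) (Fin d) ℝ) :
    ∑ i, ∑ j, (Φ * Φᵀ) i j * pd2 Q i j x =
      ∑ k, fderiv ℝ (fderiv ℝ Q) x (fun i => Φ i k) (fun i => Φ i k) := by
  rw [sum_bilin_apply_col_eq_sum_mul_transpose, sum_comm]
  simp only [pd2, fderiv_fderiv_apply_const hQ', (isSymm_mul_transpose_self Φ).apply]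

theorem fderiv_apply_eq_sum_mul_pd {d : ℕ} (Q : (Fin d → ℝ) → ℝ) (x w : Fin d → ℝ) :
    fderiv ℝ Q x w = ∑ j, w j * pd Q j x :=
  map_eq_sum_smul_map_single (fderiv ℝ Q x) w

end Coordinates

theorem second_derivative_trick {d : ℕ} (hd : 0 < d)
    (Q : (Fin d → ℝ) → ℝ) (hQ : ContDiff ℝ 2 Q)
    (b : Fin d → ℝ) (Φ : Matrix (Fin d) (Fin d) ℝ) (x : Fin d → ℝ) :
    let ψ : ℝ → ℝ := fun h =>
      ∑ i, Q (x + (h / Real.sqrt 2) • (fun j => Φ j i) + (h ^ 2 / (2 * d)) • b)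
    DifferentiableAt ℝ (deriv ψ) 0 ∧
      deriv (deriv ψ) 0 =
        (∑ j, b j * pd Q j x)
          + (1 / 2) * (∑ i, ∑ j, (Φ * Φᵀ) i j * pd2 Q i j x) := by
  intro ψ
  have hQd : Differentiable ℝ Q := hQ.differentiable (by norm_num)
  have hQ' : DifferentiableAt ℝ (fderiv ℝ Q) x :=
    (hQ.fderiv_right (m := 1) (by norm_num)).differentiable one_ne_zero x
  set a : Fin d → Fin d → ℝ := fun i => (√2)⁻¹ • fun j => Φ j i
  set c : Fin d → ℝ := (2 * d : ℝ)⁻¹ • b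
  have hψ : ψ = fun t => ∑ i, Q (x + t • a i + t ^ 2 • c) := by
    funext t
    simp only [ψ, a, c, smul_smul, div_eq_mul_inv]
  have hψ'' := hasDerivAt_deriv_sum_comp_quadraticCurve_zero x c univ a hQd hQ'
  rw [← hψ] at hψ''
  refine ⟨hψ''.differentiableAt, hψ''.deriv.trans ?_⟩
  have hdrift : ∑ _i : Fin d, fderiv ℝ Q x (2 • c) = ∑ j, b j * pd Q j x := by
    have hc : (d * 2) • c = b := by
      rw [← Nat.cast_smul_eq_nsmul ℝ, smul_smul]
      push_cast
      rw [mul_comm (d : ℝ), mul_inv_cancel₀ (by positivity), one_smul]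
    rw [sum_const, card_univ, Fintype.card_fin, ← map_nsmul, smul_smul, hc,
      fderiv_apply_eq_sum_mul_pd]
  have hdiffusion : ∑ i, fderiv ℝ (fderiv ℝ Q) x (a i) (a i) =
      1 / 2 * ∑ i, ∑ j, (Φ * Φᵀ) i j * pd2 Q i j x := by
    have hsqrt : (√2)⁻¹ * (√2)⁻¹ = (1 / 2 : ℝ) := by
      rw [← mul_inv, Real.mul_self_sqrt zero_le_two, one_div]
    simp only [a, map_smul, _root_.smul_apply, smul_eq_mul, ← mul_assoc, hsqrt, ← mul_sum,
      sum_mul_transpose_mul_pd2 hQ']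
  rw [sum_add_distrib, hdiffusion, hdrift, add_comm]
end
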